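/- arXiv:2605.02127 — 6 statements merged into one kernel-verified Lean document; each statement's English description precedes it below -/
import Mathlib

section
/- Let E be a real inner product space, let f : E → ℝ be differentiable at w, let σ > 0, and let Q, Q' be reals with 0 < Q' ≤ Q. Let y, x, w ∈ E satisfy the σ-strong-convexity inequality at the pair (y, w), i.e. f(y) ≥ f(w) + ⟨∇f(w), y − w⟩ + (σ/2)·‖y − w‖². Then the Lyapunov values satisfy V_Q(y, x; w) ≤ (Q/Q')^{3/2}·V_{Q'}(y, x; w) + (Q/Q')^{3/2}·(1/σ)·‖∇f(w)‖². -/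
open RealInnerProductSpace

lemma key_sq (l P V H : ℝ) (hl : 1 ≤ l) (hP : 0 ≤ P) (hV : 0 ≤ V) (hH : 0 ≤ H) :
    (l*P + (l-1)*V + (l-1)*H)^2 ≤ l^3*P^2 + (l^3-1)*V^2 + (l^3+1)*H^2 := by
  have hq : 0 ≤ l^2 - l + 1 := by nlinarith [sq_nonneg (l-1)]
  nlinarith [mul_nonneg (sub_nonneg.2 hl) (sq_nonneg (l*P - (V+H))),
    mul_nonneg (mul_nonneg (by linarith : (0:ℝ) ≤ l) (sub_nonneg.2 hl)) (sq_nonneg (V-H)),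
    mul_nonneg (mul_nonneg (sub_nonneg.2 hl) hq) (sq_nonneg V),
    mul_nonneg (mul_nonneg (sub_nonneg.2 hl) hq) (sq_nonneg H), sq_nonneg H]

lemma final_step (σ l F P V G Z : ℝ) (hσ : 0 < σ) (hl : 1 ≤ l)
    (hF : σ/2*V^2 - G^2/(2*σ) ≤ F)
    (hZ : Z ≤ l^3*P^2 + (l^3-1)*V^2 + (l^3+1)*(G^2/σ^2)) :
    F + σ/2*Z ≤ l^3*(F + σ/2*P^2) + l^3*(1/σ)*G^2 := by
  have hl3 : (1:ℝ) ≤ l^3 := by nlinarith [sq_nonneg l, sq_nonneg (l-1)]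
  have e1 : σ/2 * (G^2/σ^2) = G^2/(2*σ) := by field_simp
  have e2 : l^3*(1/σ)*G^2 = 2*(l^3*(G^2/(2*σ))) := by field_simp
  have h2 : σ/2*Z ≤ σ/2*(l^3*P^2) + σ/2*((l^3-1)*V^2) + (l^3+1)*(G^2/(2*σ)) := by
    have := mul_le_mul_of_nonneg_left hZ (by positivity : (0:ℝ) ≤ σ/2)
    nlinarith [e1]
  nlinarith [mul_nonneg (by linarith : (0:ℝ) ≤ l^3 - 1)
    (by linarith : (0:ℝ) ≤ F - (σ/2*V^2 - G^2/(2*σ)))]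

/-- Lyapunov recursion step for an arbitrary reference point: increasing the
condition-number parameter from `Q'` to `Q` costs a factor `(Q/Q')^{3/2}` plus a
gradient slack `(Q/Q')^{3/2}·(1/σ)·‖∇f(w)‖²`.  Here
`V_q(y, x; w) = f y − f w + (σ/2)·‖x + √q·(x − y) − w‖²`. -/
theorem stmt2 {E : Type*} [NormedAddCommGroup E] [InnerProductSpace ℝ E] [CompleteSpace E]
    (f : E → ℝ) (y x w : E) (σ Q Q' : ℝ) (hσ : 0 < σ)
    (hQ' : 0 < Q') (hQQ' : Q' ≤ Q)
    (hdiff : DifferentiableAt ℝ f w)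
    (hsc : f y ≥ f w + ⟪gradient f w, y - w⟫ + σ / 2 * ‖y - w‖ ^ 2) :
    f y - f w + σ / 2 * ‖x + Real.sqrt Q • (x - y) - w‖ ^ 2 ≤
      (Q / Q') ^ ((3 : ℝ) / 2) *
        (f y - f w + σ / 2 * ‖x + Real.sqrt Q' • (x - y) - w‖ ^ 2) +
      (Q / Q') ^ ((3 : ℝ) / 2) * (1 / σ) * ‖gradient f w‖ ^ 2 := by
  set g := gradient f w with hg
  have hQ : 0 < Q := lt_of_lt_of_le hQ' hQQ'
  set s := Real.sqrt Q with hs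
  set t := Real.sqrt Q' with ht
  have ht0 : 0 < t := Real.sqrt_pos.mpr hQ'
  have hts : t ≤ s := Real.sqrt_le_sqrt hQQ'
  set l := s / t with hl
  have hl1 : 1 ≤ l := (one_le_div ht0).mpr hts
  have hrho : (Q / Q') ^ ((3:ℝ)/2) = l ^ 3 := by
    have h1 : Q / Q' = l ^ 2 := by
      rw [hl, div_pow, hs, ht, Real.sq_sqrt hQ.le, Real.sq_sqrt hQ'.le]
    rw [h1, ← Real.rpow_natCast l 2, ← Real.rpow_mul (by positivity),
      show ((2:ℕ):ℝ) * ((3:ℝ)/2) = ((3:ℕ):ℝ) by norm_num, Real.rpow_natCast]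
  set u := y - w with hu
  set v := u + σ⁻¹ • g with hv
  set p := x + t • (x - y) - w with hp
  set z := x + s • (x - y) - w with hz
  set β := (s - t) / (1 + t) with hβ
  have hβ0 : 0 ≤ β := div_nonneg (by linarith) (by linarith)
  have hpv : p - v + σ⁻¹ • g = (1 + t) • (x - y) := by
    rw [hp, hv, hu]; module
  have hzd : z = p + β • (p - v + σ⁻¹ • g) := by
    rw [hpv, smul_smul, hβ, div_mul_cancel₀ _ (by positivity : (1:ℝ)+t ≠ 0), hz, hp]
    module
  have hnz : ‖z‖ ≤ (1+β) * ‖p‖ + β * ‖v‖ + β * (σ⁻¹ * ‖g‖) := by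
    calc ‖z‖ ≤ ‖p‖ + ‖β • (p - v + σ⁻¹ • g)‖ := hzd ▸ norm_add_le _ _
    _ = ‖p‖ + β * ‖p - v + σ⁻¹ • g‖ := by
        rw [norm_smul, Real.norm_of_nonneg hβ0]
    _ ≤ ‖p‖ + β * (‖p‖ + ‖v‖ + σ⁻¹ * ‖g‖) := by
        gcongr
        calc ‖p - v + σ⁻¹ • g‖ ≤ ‖p - v‖ + ‖σ⁻¹ • g‖ := norm_add_le _ _
        _ ≤ ‖p‖ + ‖v‖ + σ⁻¹ * ‖g‖ := by
            rw [norm_smul, Real.norm_of_nonneg (by positivity : (0:ℝ) ≤ σ⁻¹)]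
            have := norm_sub_le p v
            linarith
    _ = (1+β) * ‖p‖ + β * ‖v‖ + β * (σ⁻¹ * ‖g‖) := by ring
  have hβl : β ≤ l - 1 := by
    have h1 : β ≤ (s - t)/t := by
      rw [hβ]
      gcongr
      · linarith
    have h2 : (s - t)/t = l - 1 := by rw [hl]; field_simp
    linarith
  -- strong convexity lower bound
  have hvnorm : ‖v‖^2 = ‖u‖^2 + 2*(σ⁻¹*⟪g,u⟫) + σ⁻¹^2*‖g‖^2 := by
    rw [hv, @norm_add_sq_real, real_inner_smul_right, norm_smul,
      Real.norm_of_nonneg (by positivity : (0:ℝ) ≤ σ⁻¹), real_inner_comm, mul_pow]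
  have hF : σ/2*‖v‖^2 - ‖g‖^2/(2*σ) ≤ f y - f w := by
    have h3 : σ/2*‖v‖^2 = σ/2*‖u‖^2 + ⟪g,u⟫ + ‖g‖^2/(2*σ) := by
      rw [hvnorm]; field_simp
    have h4 := hsc
    linarith
  -- norm-squared bound
  have hb2 : ‖z‖ ≤ l*‖p‖ + (l-1)*‖v‖ + (l-1)*(σ⁻¹*‖g‖) := by
    have c1 : 0 ≤ l - 1 - β := by linarith
    nlinarith [mul_nonneg c1 (norm_nonneg p), mul_nonneg c1 (norm_nonneg v),
      mul_nonneg c1 (mul_nonneg (by positivity : (0:ℝ) ≤ σ⁻¹) (norm_nonneg g))]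
  have hZ : ‖z‖^2 ≤ l^3*‖p‖^2 + (l^3-1)*‖v‖^2 + (l^3+1)*(‖g‖^2/σ^2) := by
    have e3 : (σ⁻¹*‖g‖)^2 = ‖g‖^2/σ^2 := by rw [mul_pow]; field_simp
    calc ‖z‖^2 ≤ (l*‖p‖ + (l-1)*‖v‖ + (l-1)*(σ⁻¹*‖g‖))^2 :=
          pow_le_pow_left₀ (norm_nonneg z) hb2 2
    _ ≤ l^3*‖p‖^2 + (l^3-1)*‖v‖^2 + (l^3+1)*(σ⁻¹*‖g‖)^2 :=
          key_sq l ‖p‖ ‖v‖ (σ⁻¹*‖g‖) hl1 (norm_nonneg p) (norm_nonneg v)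
            (by positivity)
    _ = l^3*‖p‖^2 + (l^3-1)*‖v‖^2 + (l^3+1)*(‖g‖^2/σ^2) := by rw [e3]
  rw [hrho]
  have := final_step σ l (f y - f w) ‖p‖ ‖v‖ ‖g‖ (‖z‖^2) hσ hl1 hF hZ
  linarith
end

section
/- Let E be a real inner product space, let f : E → ℝ be differentiable at y, let σ > 0, and let Q, Q' be reals with 0 < Q' ≤ Q. Let y, x, w ∈ E satisfy the descent condition f(w) ≤ f(y) − (1/(2σQ))·‖∇f(y)‖² and the σ-strong-convexity inequality at the pair (w, y), i.e. f(w) ≥ f(y) + ⟨∇f(y), w − y⟩ + (σ/2)·‖w − y‖². Then the Lyapunov values satisfy V_Q(y, x; w) ≤ (1 + 2(Q − Q'))·(Q/Q')^{3/2}·V_{Q'}(y, x; w). -/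
open RealInnerProductSpace

private lemma keyA' (p q : ℝ) (hq : 0 < q) (hpq : q ≤ p) : (1+p)^2*q^3 ≤ p^3*(1+q)^2 := by
  have hp : 0 < p := hq.trans_le hpq
  have h1 : q^3 ≤ p^3 := pow_le_pow_left₀ hq.le hpq 3
  have h2 : p*q^3 ≤ p^3*q := by
    nlinarith [sq_nonneg (p-q), mul_pos hp hq,
      mul_nonneg (mul_nonneg hp.le hq.le) (sub_nonneg.mpr hpq)]
  have h3 : p^2*q^3 ≤ p^3*q^2 := by
    nlinarith [mul_nonneg (mul_nonneg (sq_nonneg p) (sq_nonneg q)) (sub_nonneg.mpr hpq)]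
  nlinarith [h1, h2, h3]

private lemma h2lem' (p q : ℝ) (hq : 0 < q) (hpq : q ≤ p) :
    q^3 + 2*(p-q)*(p+q)*q^3 ≤ (p+q)^2*p*(1+q)^2 := by
  have hp : 0 < p := hq.trans_le hpq
  have hs : 0 < p + q := by linarith
  have e1 : q^3 ≤ (p+q)^2*p := by
    nlinarith [mul_pos hp hq, sq_nonneg (p+q),
      mul_nonneg (sub_nonneg.mpr hpq) (mul_pos hq hq).le]
  have hb : 0 ≤ p^2 - p*q + 2*q^2 := by nlinarith [sq_nonneg (p-q), sq_nonneg q]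
  have e2 : 2*(p-q)*(p+q)*q^3 ≤ (p+q)^2*p*q^2 := by
    nlinarith [mul_nonneg (mul_nonneg hs.le (sq_nonneg q)) hb]
  nlinarith [e1, e2, mul_nonneg (mul_nonneg (mul_nonneg hq.le (sq_nonneg (p+q))) hp.le) hq.le,
    mul_pos (mul_pos (mul_pos hq hs) hs) hp]

private lemma keyB' (p q : ℝ) (hq : 0 < q) (hpq : q ≤ p) :
    2*((p-q)*(p+q))*((1+q)^2*q^3) + (1+2*((p-q)*(p+q)))*(4*p^2*(p-q)^2*q^3)
      ≤ 2*((p-q)*(p+q))*(1+2*((p-q)*(p+q)))*(p^3*(1+q)^2) := by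
  have hp : 0 < p := hq.trans_le hpq
  have he : 0 ≤ p - q := sub_nonneg.mpr hpq
  have hq3 : q^3 ≤ p^3 := pow_le_pow_left₀ hq.le hpq 3
  have hs : 0 < p + q := by linarith
  have t1 : 0 ≤ 2*(p-q)*(p+q)*(1+q)^2*(p^3-q^3) := by
    have h0 : 0 ≤ p^3 - q^3 := by linarith
    positivity
  have t2 : 0 ≤ 4*(p-q)^2*p^2*((p+q)^2*p*(1+q)^2 - (q^3 + 2*(p-q)*(p+q)*q^3)) := by
    have h0 := h2lem' p q hq hpq
    have h1 : 0 ≤ (p+q)^2*p*(1+q)^2 - (q^3 + 2*(p-q)*(p+q)*q^3) := by linarith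
    positivity
  nlinarith [t1, t2]

private lemma key' (p q S a A M : ℝ) (hq : 0 < q) (hpq : q ≤ p) (hS : 0 < S)
    (ha : 0 ≤ a) (hA : 0 ≤ A) (hM : 0 ≤ M) (hM2 : S*M^2 ≤ 4*p^2*a) :
    a + S*(((1+p)/(1+q))*A + ((p-q)/(1+q))*M)^2
      ≤ (1+2*(p^2-q^2))*(p/q)^3*(a + S*A^2) := by
  have hp : 0 < p := hq.trans_le hpq
  have h1q : (0:ℝ) < 1 + q := by linarith
  rcases eq_or_lt_of_le hpq with h|hlt
  · subst h
    rw [div_self h1q.ne', div_self hq.ne']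
    apply le_of_eq; ring
  · have hδ : 0 < (p-q)*(p+q) := mul_pos (by linarith) (by linarith)
    have c1 : 2*((p-q)*(p+q))*((1+p)*A + (p-q)*M)^2
        ≤ 2*((p-q)*(p+q))*(1+2*((p-q)*(p+q)))*((1+p)*A)^2
          + (1+2*((p-q)*(p+q)))*((p-q)*M)^2 := by
      nlinarith [sq_nonneg (2*((p-q)*(p+q))*((1+p)*A) - (p-q)*M)]
    have P1 := mul_le_mul_of_nonneg_left c1 (by positivity : (0:ℝ) ≤ S*q^3)
    have P2 := mul_le_mul_of_nonneg_left hM2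
      (by positivity : (0:ℝ) ≤ (1+2*((p-q)*(p+q)))*(p-q)^2*q^3*S)
    have P3 := mul_le_mul_of_nonneg_left (keyA' p q hq hpq)
      (by positivity : (0:ℝ) ≤ 2*((p-q)*(p+q))*(1+2*((p-q)*(p+q)))*(S*A^2))
    have P4 := mul_le_mul_of_nonneg_left (keyB' p q hq hpq) ha
    have main : (2*((p-q)*(p+q)))*((1+q)^2*q^3*a + q^3*(S*((1+p)*A + (p-q)*M)^2))
        ≤ (2*((p-q)*(p+q)))*((1+2*((p-q)*(p+q)))*(p^3*(1+q)^2)*(a + S*A^2)) := by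
      nlinarith [P1, P2, P3, P4]
    have hXY := le_of_mul_le_mul_left main (by positivity : (0:ℝ) < 2*((p-q)*(p+q)))
    have e1 : a + S*(((1+p)/(1+q))*A + ((p-q)/(1+q))*M)^2
        = ((1+q)^2*q^3*a + q^3*(S*((1+p)*A + (p-q)*M)^2)) / ((1+q)^2*q^3) := by
      field_simp
    have e2 : (1+2*(p^2-q^2))*(p/q)^3*(a + S*A^2)
        = ((1+2*((p-q)*(p+q)))*(p^3*(1+q)^2)*(a + S*A^2)) / ((1+q)^2*q^3) := by
      field_simp; ring
    rw [e1, e2]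
    exact div_le_div_of_nonneg_right hXY (by positivity)

/-- Lyapunov recursion step for a descent reference point: the gradient slack
vanishes at the cost of an additional factor `1 + 2(Q − Q')`.  Here
`V_q(y, x; w) = f y − f w + (σ/2)·‖x + √q·(x − y) − w‖²`. -/
theorem stmt3 {E : Type*} [NormedAddCommGroup E] [InnerProductSpace ℝ E] [CompleteSpace E]
    (f : E → ℝ) (y x w : E) (σ Q Q' : ℝ) (hσ : 0 < σ)
    (hQ' : 0 < Q') (hQQ' : Q' ≤ Q)
    (hdiff : DifferentiableAt ℝ f y)
    (hdesc : f w ≤ f y - 1 / (2 * (σ * Q)) * ‖gradient f y‖ ^ 2)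
    (hsc : f w ≥ f y + ⟪gradient f y, w - y⟫ + σ / 2 * ‖w - y‖ ^ 2) :
    f y - f w + σ / 2 * ‖x + Real.sqrt Q • (x - y) - w‖ ^ 2 ≤
      (1 + 2 * (Q - Q')) * (Q / Q') ^ ((3 : ℝ) / 2) *
        (f y - f w + σ / 2 * ‖x + Real.sqrt Q' • (x - y) - w‖ ^ 2) := by
  have hQpos : 0 < Q := hQ'.trans_le hQQ'
  have hq : 0 < Real.sqrt Q' := Real.sqrt_pos.mpr hQ'
  have hpq : Real.sqrt Q' ≤ Real.sqrt Q := Real.sqrt_le_sqrt hQQ'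
  have hp : 0 < Real.sqrt Q := hq.trans_le hpq
  have hQp : Real.sqrt Q ^ 2 = Q := Real.sq_sqrt hQpos.le
  have hQ'q : Real.sqrt Q' ^ 2 = Q' := Real.sq_sqrt hQ'.le
  have hrpow : (Q/Q') ^ ((3:ℝ)/2) = (Real.sqrt Q / Real.sqrt Q')^3 := by
    have h1 : (Q/Q' : ℝ) = (Real.sqrt Q / Real.sqrt Q')^2 := by
      rw [div_pow, hQp, hQ'q]
    rw [h1, ← Real.rpow_natCast (Real.sqrt Q / Real.sqrt Q') 2,
      ← Real.rpow_mul (by positivity), ← Real.rpow_natCast (Real.sqrt Q / Real.sqrt Q') 3]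
    norm_num
  have h2p : (0:ℝ) < 2*(σ*Q) := by positivity
  have h3 : (1/(2*(σ*Q))) * ‖gradient f y‖^2 ≤ f y - f w := by linarith
  have ha : 0 ≤ f y - f w := by
    have := mul_nonneg (by positivity : (0:ℝ) ≤ 1/(2*(σ*Q))) (sq_nonneg ‖gradient f y‖)
    linarith
  have hanew : ‖gradient f y‖^2 ≤ 2*(σ*Q)*(f y - f w) := by
    calc ‖gradient f y‖^2 = (2*(σ*Q)) * ((1/(2*(σ*Q))) * ‖gradient f y‖^2) := by
          field_simp
      _ ≤ (2*(σ*Q)) * (f y - f w) := mul_le_mul_of_nonneg_left h3 h2p.le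
  have hsc2 : f y - f w + σ/2*‖y-w‖^2 ≤ ‖gradient f y‖ * ‖y-w‖ := by
    have h1 : ⟪gradient f y, w - y⟫ = -⟪gradient f y, y - w⟫ := by
      rw [show w - y = -(y-w) by abel, inner_neg_right]
    have h2 : ‖w-y‖ = ‖y-w‖ := norm_sub_rev w y
    have h4 := real_inner_le_norm (gradient f y) (y-w)
    rw [h1, h2] at hsc
    linarith
  have hM2 : σ/2*‖y-w‖^2 ≤ 4*(Real.sqrt Q)^2*(f y - f w) := by
    by_cases hM0 : ‖y-w‖ = 0
    · have h5 : (0:ℝ) ≤ 4*(Real.sqrt Q)^2*(f y - f w) := by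
        have := mul_nonneg (by positivity : (0:ℝ) ≤ 4*(Real.sqrt Q)^2) ha
        linarith
      rw [hM0]; norm_num; linarith
    · have hMpos : 0 < ‖y-w‖ := lt_of_le_of_ne (norm_nonneg _) (Ne.symm hM0)
      have s1 : σ/2*‖y-w‖ ≤ ‖gradient f y‖ := by
        have h6 : σ/2*‖y-w‖*‖y-w‖ ≤ ‖gradient f y‖*‖y-w‖ := by nlinarith [hsc2, ha]
        exact le_of_mul_le_mul_right h6 hMpos
      have s2 : (σ/2*‖y-w‖)^2 ≤ ‖gradient f y‖^2 :=
        pow_le_pow_left₀ (by positivity) s1 2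
      have hfin : (σ/2)*(σ/2*‖y-w‖^2) ≤ (σ/2)*(4*(Real.sqrt Q)^2*(f y - f w)) := by
        have hQrw : (Real.sqrt Q)^2 = Q := hQp
        nlinarith [s2, hanew]
      exact le_of_mul_le_mul_left hfin (by positivity)
  have h1q' : (0:ℝ) < 1 + Real.sqrt Q' := by positivity
  have hvec : x + Real.sqrt Q • (x-y) - w
      = ((1+Real.sqrt Q)/(1+Real.sqrt Q')) • (x + Real.sqrt Q' • (x-y) - w)
        - ((Real.sqrt Q-Real.sqrt Q')/(1+Real.sqrt Q')) • (y-w) := by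
    match_scalars <;> field_simp <;> ring
  have hnorm : ‖x + Real.sqrt Q • (x-y) - w‖
      ≤ ((1+Real.sqrt Q)/(1+Real.sqrt Q'))*‖x + Real.sqrt Q' • (x-y) - w‖
        + ((Real.sqrt Q-Real.sqrt Q')/(1+Real.sqrt Q'))*‖y-w‖ := by
    rw [hvec]
    refine (norm_sub_le _ _).trans ?_
    rw [norm_smul, norm_smul, Real.norm_of_nonneg (by positivity),
      Real.norm_of_nonneg (div_nonneg (sub_nonneg.mpr hpq) h1q'.le)]
  have hsq : σ/2*‖x + Real.sqrt Q • (x-y) - w‖^2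
      ≤ σ/2*(((1+Real.sqrt Q)/(1+Real.sqrt Q'))*‖x + Real.sqrt Q' • (x-y) - w‖
        + ((Real.sqrt Q-Real.sqrt Q')/(1+Real.sqrt Q'))*‖y-w‖)^2 :=
    mul_le_mul_of_nonneg_left (pow_le_pow_left₀ (norm_nonneg _) hnorm 2) (by positivity)
  have hkey := key' (Real.sqrt Q) (Real.sqrt Q') (σ/2) (f y - f w)
    ‖x + Real.sqrt Q' • (x-y) - w‖ ‖y-w‖ hq hpq (by positivity) ha
    (norm_nonneg _) (norm_nonneg _) hM2
  rw [hrpow, show Q - Q' = (Real.sqrt Q)^2 - (Real.sqrt Q')^2 by rw [hQp, hQ'q]]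
  linarith [hsq, hkey]
end

section
/- Let t ∈ ℕ, let Q : ℕ → ℝ be a nondecreasing sequence with Q(0) ≥ 1, and let V : ℕ → ℝ with V(0) ≥ 0. Let m := #{k < t : Q(k+1) > Q(k)} be the number of strict increases of Q before index t. Suppose that for every k < t one has V(k+1) ≤ (1 − 1/√(Q(t)))·(1 + 2·(Q(k+1) − Q(k)))·(Q(k+1)/Q(k))^{3/2}·V(k). Then V(t) ≤ exp(−t/√(Q(t)))·(3·Q(t))^{m}·(Q(t)/Q(0))^{3/2}·V(0). -/
/-- Chained Lyapunov recursion (descent reference point, sequence form): with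
`m` the number of strict increases of the condition-number sequence `Q` before
index `t`, per-step factors `(1 − 1/√Q(t))·(1 + 2(Q(k+1) − Q(k)))·(Q(k+1)/Q(k))^{3/2}`
chain into `V(t) ≤ e^{−t/√Q(t)}·(3Q(t))^m·(Q(t)/Q(0))^{3/2}·V(0)`. -/
theorem stmt7 (t : ℕ) (Q : ℕ → ℝ) (hQmono : Monotone Q) (hQ0 : 1 ≤ Q 0)
    (V : ℕ → ℝ) (hV0 : 0 ≤ V 0)
    (hrec : ∀ k < t, V (k + 1) ≤
      (1 - 1 / Real.sqrt (Q t)) * (1 + 2 * (Q (k + 1) - Q k)) *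
        (Q (k + 1) / Q k) ^ ((3 : ℝ) / 2) * V k) :
    V t ≤ Real.exp (-(t : ℝ) / Real.sqrt (Q t)) *
      (3 * Q t) ^ (((Finset.range t).filter fun k => Q k < Q (k + 1)).card) *
      (Q t / Q 0) ^ ((3 : ℝ) / 2) * V 0 := by
  have hQ1 : ∀ k, 1 ≤ Q k := fun k => hQ0.trans (hQmono (Nat.zero_le k))
  have hQpos : ∀ k, 0 < Q k := fun k => lt_of_lt_of_le one_pos (hQ1 k)
  set s := Real.sqrt (Q t) with hs_def
  have hs1 : 1 ≤ s := by
    rw [hs_def, show (1:ℝ) = Real.sqrt 1 from (Real.sqrt_one).symm]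
    exact Real.sqrt_le_sqrt (hQ1 t)
  have hs0 : 0 < s := lt_of_lt_of_le one_pos hs1
  have hx1 : 1 / s ≤ 1 := by rw [div_le_one hs0]; exact hs1
  have hx0 : 0 ≤ 1 - 1 / s := by linarith
  have hxp : 0 < 1 / s := by positivity
  have hexp : 1 - 1 / s ≤ Real.exp (-(1 / s)) := by
    have := Real.add_one_le_exp (-(1 / s))
    linarith
  suffices h : ∀ n, n ≤ t → V n ≤ Real.exp (-(n : ℝ) / s) *
      (3 * Q t) ^ (((Finset.range n).filter fun k => Q k < Q (k + 1)).card) *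
      (Q n / Q 0) ^ ((3 : ℝ) / 2) * V 0 from h t le_rfl
  intro n hn
  induction n with
  | zero =>
    simp [div_self (hQpos 0).ne', Real.one_rpow]
  | succ n ih =>
    have hlt : n < t := hn
    have ihn := ih (le_of_lt hlt)
    have hΔ : 0 ≤ Q (n + 1) - Q n := by
      have := hQmono (Nat.le_succ n); linarith
    have hc : 0 ≤ (1 - 1 / s) * (1 + 2 * (Q (n + 1) - Q n)) *
        (Q (n + 1) / Q n) ^ ((3 : ℝ) / 2) :=
      mul_nonneg (mul_nonneg hx0 (by linarith))
        (Real.rpow_nonneg (div_nonneg (hQpos _).le (hQpos _).le) _)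
    have step1 : V (n + 1) ≤ (1 - 1 / s) * (1 + 2 * (Q (n + 1) - Q n)) *
        (Q (n + 1) / Q n) ^ ((3 : ℝ) / 2) *
        (Real.exp (-(n : ℝ) / s) *
          (3 * Q t) ^ (((Finset.range n).filter fun k => Q k < Q (k + 1)).card) *
          (Q n / Q 0) ^ ((3 : ℝ) / 2) * V 0) :=
      (hrec n hlt).trans (mul_le_mul_of_nonneg_left ihn hc)
    refine step1.trans ?_
    have hexpsplit : Real.exp (-((n : ℕ) + 1 : ℕ) / s) =
        Real.exp (-(1 / s)) * Real.exp (-(n : ℝ) / s) := by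
      rw [← Real.exp_add]; congr 1; push_cast; ring
    have hrpowsplit : (Q (n + 1) / Q 0) ^ ((3 : ℝ) / 2) =
        (Q (n + 1) / Q n) ^ ((3 : ℝ) / 2) * (Q n / Q 0) ^ ((3 : ℝ) / 2) := by
      rw [← Real.mul_rpow (div_nonneg (hQpos _).le (hQpos _).le)
        (div_nonneg (hQpos _).le (hQpos _).le)]
      congr 1
      field_simp
      rw [mul_div_cancel_right₀ _ (hQpos n).ne']
    have hcard : (((Finset.range (n + 1)).filter fun k => Q k < Q (k + 1)).card) =
        (if Q n < Q (n + 1) then 1 else 0) +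
          (((Finset.range n).filter fun k => Q k < Q (k + 1)).card) := by
      rw [Finset.range_add_one, Finset.filter_insert]
      by_cases h : Q n < Q (n + 1) <;>
        simp [h, Finset.card_insert_of_notMem (by simp : n ∉ Finset.range n)] <;>
        omega
    have key : (1 - 1 / s) * (1 + 2 * (Q (n + 1) - Q n)) ≤
        Real.exp (-(1 / s)) * (3 * Q t) ^ (if Q n < Q (n + 1) then 1 else 0) := by
      by_cases h : Q n < Q (n + 1)
      · simp only [h, if_true, pow_one]
        have h1 : 1 + 2 * (Q (n + 1) - Q n) ≤ 3 * Q t := by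
          have h2 : Q (n + 1) ≤ Q t := hQmono hlt
          have := hQ1 n
          linarith
        have h3 : 0 ≤ 1 + 2 * (Q (n + 1) - Q n) := by linarith
        exact mul_le_mul hexp h1 h3 (Real.exp_pos _).le
      · simp only [h, if_false, pow_zero, mul_one]
        have heq : Q (n + 1) = Q n := le_antisymm (not_lt.mp h) (hQmono (Nat.le_succ n))
        rw [heq]
        simpa using hexp
    calc (1 - 1 / s) * (1 + 2 * (Q (n + 1) - Q n)) *
        (Q (n + 1) / Q n) ^ ((3 : ℝ) / 2) *
        (Real.exp (-(n : ℝ) / s) *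
          (3 * Q t) ^ (((Finset.range n).filter fun k => Q k < Q (k + 1)).card) *
          (Q n / Q 0) ^ ((3 : ℝ) / 2) * V 0)
        = ((1 - 1 / s) * (1 + 2 * (Q (n + 1) - Q n))) *
          (Real.exp (-(n : ℝ) / s) *
            (3 * Q t) ^ (((Finset.range n).filter fun k => Q k < Q (k + 1)).card) *
            ((Q (n + 1) / Q n) ^ ((3 : ℝ) / 2) * (Q n / Q 0) ^ ((3 : ℝ) / 2)) * V 0) := by
          ring
      _ ≤ (Real.exp (-(1 / s)) * (3 * Q t) ^ (if Q n < Q (n + 1) then 1 else 0)) *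
          (Real.exp (-(n : ℝ) / s) *
            (3 * Q t) ^ (((Finset.range n).filter fun k => Q k < Q (k + 1)).card) *
            ((Q (n + 1) / Q n) ^ ((3 : ℝ) / 2) * (Q n / Q 0) ^ ((3 : ℝ) / 2)) * V 0) := by
          apply mul_le_mul_of_nonneg_right key
          have h0 : (0:ℝ) ≤ 3 * Q t := by linarith [hQpos t]
          exact mul_nonneg (mul_nonneg (mul_nonneg (Real.exp_pos _).le
            (pow_nonneg h0 _))
            (mul_nonneg (Real.rpow_nonneg (div_nonneg (hQpos _).le (hQpos _).le) _)
              (Real.rpow_nonneg (div_nonneg (hQpos _).le (hQpos _).le) _))) hV0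
      _ = Real.exp (-((n : ℕ) + 1 : ℕ) / s) *
          (3 * Q t) ^ (((Finset.range (n + 1)).filter fun k => Q k < Q (k + 1)).card) *
          (Q (n + 1) / Q 0) ^ ((3 : ℝ) / 2) * V 0 := by
          rw [hexpsplit, hrpowsplit, hcard, pow_add]
          ring
end

section
/- Let E be a real inner product space, let f : E → ℝ be differentiable at w ∈ E, let σ > 0, and let Q, Qᵃ, Q' be reals with 0 < Q' ≤ Qᵃ ≤ Q and Qᵃ > 1. Let y', x', yᵃ, xᵃ, y, x ∈ E and suppose: (i) (1 + 1/(√Qᵃ − 1))·V_{Qᵃ}(yᵃ, xᵃ; w) ≤ V_{Qᵃ}(y', x'; w); (ii) x + √Qᵃ·(x − y) = xᵃ + √Qᵃ·(xᵃ − yᵃ) and f(y) ≤ f(yᵃ); (iii) the σ-strong-convexity inequality holds at the pairs (y, w) and (y', w), i.e. f(u) ≥ f(w) + ⟨∇f(w), u − w⟩ + (σ/2)·‖u − w‖² for u ∈ {y, y'}. Then V_Q(y, x; w) ≤ (1/(1 + 1/(√Qᵃ − 1)))·(Q/Q')^{3/2}·V_{Q'}(y', x'; w) + (2·Q^{3/2}/(σ·Q'^{3/2}))·‖∇f(w)‖².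 -/
open RealInnerProductSpace

set_option maxHeartbeats 1000000

lemma scalar_key (σ s s' A B G I F Z : ℝ) (hσ : 0 < σ) (hs' : 0 < s') (hss : s' ≤ s)
    (hA : 0 ≤ A) (hB : 0 ≤ B) (hG : 0 ≤ G)
    (hI : -(A*B) ≤ I)
    (hF : σ/2*B^2 - G*B ≤ F)
    (hZeq : (1+s')^2 * Z = (1+s)^2*A^2 + 2*((1+s)*(s'-s))*I + (s'-s)^2*B^2) :
    F + σ/2*Z ≤ (s/s')^3*(F + σ/2*A^2) + ((s/s')^3-1)/σ*G^2 := by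
  have hd : 0 ≤ s - s' := by linarith
  have hs : 0 < s := lt_of_lt_of_le hs' hss
  have h1s' : (0:ℝ) < 1 + s' := by linarith
  have hd3 : 0 ≤ s^3 - s'^3 := by linarith only [pow_le_pow_left₀ hs'.le hss 3]
  have hGB : σ*(G*B) ≤ G^2 + σ^2*B^2/4 := by nlinarith [sq_nonneg (2*G - σ*B)]
  -- Step 1
  have h1 : s'*((1+s')^2*Z) ≤ s*(1+s)^2*A^2 + s'*s*(s-s')*B^2 := by
    have e1 : 0 ≤ (s-s')*((1+s)*A - s'*B)^2 := mul_nonneg hd (sq_nonneg _)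
    have e2 : 0 ≤ 2*s'*(1+s)*(s-s')*(I + A*B) :=
      mul_nonneg (mul_nonneg (mul_nonneg (by positivity) (by linarith)) hd) (by linarith)
    have hZeq' := congrArg (fun t => s'*t) hZeq
    linarith only [hZeq', e1, e2]
  have t0 : σ^2*s'^2/2*(s'*((1+s')^2*Z)) ≤ σ^2*s'^2/2*(s*(1+s)^2*A^2 + s'*s*(s-s')*B^2) :=
    mul_le_mul_of_nonneg_left h1 (by positivity)
  have hb : s'*(1+s) ≤ s*(1+s') := by nlinarith
  have hbb : (s'*(1+s))*(s'*(1+s)) ≤ (s*(1+s'))*(s*(1+s')) :=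
    mul_le_mul hb hb (by positivity) (by positivity)
  have hlam : s'^2*(s*(1+s)^2) ≤ s^3*(1+s')^2 := by
    linarith only [mul_le_mul_of_nonneg_left hbb hs.le]
  have tlam : σ^2*A^2/2*(s'^2*(s*(1+s)^2)) ≤ σ^2*A^2/2*(s^3*(1+s')^2) :=
    mul_le_mul_of_nonneg_left hlam (by positivity)
  have hmF : -F ≤ G*B - σ/2*B^2 := by linarith
  have t1 : σ*(1+s')^2*(s^3-s'^3)*(-F) ≤ σ*(1+s')^2*(s^3-s'^3)*(G*B - σ/2*B^2) :=
    mul_le_mul_of_nonneg_left hmF (mul_nonneg (by positivity) hd3)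
  have t2 : ((1+s')^2*(s^3-s'^3))*(σ*(G*B)) ≤ ((1+s')^2*(s^3-s'^3))*(G^2 + σ^2*B^2/4) :=
    mul_le_mul_of_nonneg_left hGB (mul_nonneg (by positivity) hd3)
  have hc : 2*(s*s'^3*(s-s')) ≤ (s^3-s'^3)*(1+s')^2 := by
    nlinarith [mul_nonneg hd (mul_nonneg (mul_nonneg hs.le (sq_nonneg s')) hd),
      mul_nonneg hd (by positivity : (0:ℝ) ≤ s^2 + 2*s^2*s' + s*s' + 2*s*s'^2 + s'^2 + 2*s'^3 + s'^4)]
  have tc : σ^2*B^2/4*(2*(s*s'^3*(s-s'))) ≤ σ^2*B^2/4*((s^3-s'^3)*(1+s')^2) :=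
    mul_le_mul_of_nonneg_left hc (by positivity)
  have P' : σ*s'^3*(1+s')^2*F + σ^2*s'^3*(1+s')^2/2*Z ≤
      σ*s^3*(1+s')^2*F + σ^2*s^3*(1+s')^2/2*A^2 + (s^3-s'^3)*(1+s')^2*G^2 := by
    have S := add_le_add (add_le_add (add_le_add (add_le_add t0 tlam) t1) t2) tc
    linarith only [S]
  have hden : (0:ℝ) < σ*s'^3*(1+s')^2 := by positivity
  have hrepr : s^3/s'^3*(F + σ/2*A^2) + (s^3/s'^3 - 1)/σ*G^2 - (F + σ/2*Z)
      = ((σ*s^3*(1+s')^2*F + σ^2*s^3*(1+s')^2/2*A^2 + (s^3-s'^3)*(1+s')^2*G^2)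
         - (σ*s'^3*(1+s')^2*F + σ^2*s'^3*(1+s')^2/2*Z)) / (σ*s'^3*(1+s')^2) := by
    field_simp
  have h0 : 0 ≤ s^3/s'^3*(F + σ/2*A^2) + (s^3/s'^3 - 1)/σ*G^2 - (F + σ/2*Z) := by
    rw [hrepr]
    exact div_nonneg (by linarith) hden.le
  rw [div_pow]
  linarith only [h0]

lemma Vcomp {E : Type*} [NormedAddCommGroup E] [InnerProductSpace ℝ E]
    (σ s s' : ℝ) (hσ : 0 < σ) (hs' : 0 < s') (hss : s' ≤ s)
    (F : ℝ) (g y x w : E)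
    (hF : ⟪g, y - w⟫ + σ/2*‖y - w‖^2 ≤ F) :
    F + σ/2*‖x + s•(x-y) - w‖^2 ≤
      (s/s')^3*(F + σ/2*‖x + s'•(x-y) - w‖^2) + ((s/s')^3-1)/σ*‖g‖^2 := by
  have h1s' : (0:ℝ) < 1 + s' := by linarith
  have hid : (1+s') • (x + s•(x-y) - w) = (1+s) • (x + s'•(x-y) - w) + (s'-s) • (y-w) := by
    module
  have hZeq : (1+s')^2 * ‖x + s•(x-y) - w‖^2 =
      (1+s)^2*‖x + s'•(x-y) - w‖^2 + 2*((1+s)*(s'-s))*⟪x + s'•(x-y) - w, y-w⟫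
        + (s'-s)^2*‖y-w‖^2 := by
    have h2 : (1+s')^2 * ‖x + s•(x-y) - w‖^2 = ‖(1+s') • (x + s•(x-y) - w)‖^2 := by
      rw [norm_smul, Real.norm_eq_abs, abs_of_pos h1s', mul_pow]
    rw [h2, hid, norm_add_sq_real]
    simp only [norm_smul, real_inner_smul_left, real_inner_smul_right, Real.norm_eq_abs,
      mul_pow, sq_abs]
    ring
  have hI : -(‖x + s'•(x-y) - w‖*‖y-w‖) ≤ ⟪x + s'•(x-y) - w, y-w⟫ := by
    have h3 := abs_real_inner_le_norm (x + s'•(x-y) - w) (y-w)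
    have h4 := neg_abs_le ⟪x + s'•(x-y) - w, y-w⟫
    linarith
  have hF' : σ/2*‖y-w‖^2 - ‖g‖*‖y-w‖ ≤ F := by
    have h5 := abs_real_inner_le_norm g (y-w)
    have h6 := neg_abs_le ⟪g, y-w⟫
    linarith
  exact scalar_key σ s s' _ _ _ _ F _ hσ hs' hss (norm_nonneg _) (norm_nonneg _)
    (norm_nonneg _) hI hF' hZeq

/-- Restarted Lyapunov recursion, general reference point (Lemma combined-restart (a)):
if the AGD step decreases the Lyapunov value by `1 + 1/(√Qᵃ − 1)` and the restart
preserves the auxiliary point without increasing the function value, then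
`V_Q(y, x; w) ≤ (1/(1 + 1/(√Qᵃ − 1)))·(Q/Q')^{3/2}·V_{Q'}(y', x'; w)
  + (2·Q^{3/2}/(σ·Q'^{3/2}))·‖∇f(w)‖²`.
Here `V_q(y, x; w) = f y − f w + (σ/2)·‖x + √q·(x − y) − w‖²`. -/
theorem stmt8 {E : Type*} [NormedAddCommGroup E] [InnerProductSpace ℝ E] [CompleteSpace E]
    (f : E → ℝ) (w : E) (σ Q Qa Q' : ℝ) (hσ : 0 < σ)
    (hQ' : 0 < Q') (hQ'Qa : Q' ≤ Qa) (hQaQ : Qa ≤ Q) (hQa1 : 1 < Qa)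
    (hdiff : DifferentiableAt ℝ f w)
    (y' x' ya xa y x : E)
    (hstep : (1 + 1 / (Real.sqrt Qa - 1)) *
        (f ya - f w + σ / 2 * ‖xa + Real.sqrt Qa • (xa - ya) - w‖ ^ 2) ≤
      f y' - f w + σ / 2 * ‖x' + Real.sqrt Qa • (x' - y') - w‖ ^ 2)
    (hz : x + Real.sqrt Qa • (x - y) = xa + Real.sqrt Qa • (xa - ya))
    (hfy : f y ≤ f ya)
    (hsc_y : f y ≥ f w + ⟪gradient f w, y - w⟫ + σ / 2 * ‖y - w‖ ^ 2)
    (hsc_y' : f y' ≥ f w + ⟪gradient f w, y' - w⟫ + σ / 2 * ‖y' - w‖ ^ 2) :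
    f y - f w + σ / 2 * ‖x + Real.sqrt Q • (x - y) - w‖ ^ 2 ≤
      (1 / (1 + 1 / (Real.sqrt Qa - 1))) * (Q / Q') ^ ((3 : ℝ) / 2) *
        (f y' - f w + σ / 2 * ‖x' + Real.sqrt Q' • (x' - y') - w‖ ^ 2) +
      2 * Q ^ ((3 : ℝ) / 2) / (σ * Q' ^ ((3 : ℝ) / 2)) * ‖gradient f w‖ ^ 2 := by
  have hQa0 : (0:ℝ) < Qa := by linarith
  have hQ0 : (0:ℝ) < Q := by linarith
  set sQ := Real.sqrt Q with hsQdef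
  set sa := Real.sqrt Qa with hsadef
  set s' := Real.sqrt Q' with hs'def
  have hs'0 : 0 < s' := Real.sqrt_pos.2 hQ'
  have hs'a : s' ≤ sa := Real.sqrt_le_sqrt hQ'Qa
  have hsaQ : sa ≤ sQ := Real.sqrt_le_sqrt hQaQ
  have hsa1 : 1 < sa := by
    have := Real.sqrt_lt_sqrt (by norm_num) hQa1
    rwa [Real.sqrt_one] at this
  have hsa0 : 0 < sa := by linarith
  have hsQ0 : 0 < sQ := by linarith
  have hrwp : ∀ a : ℝ, 0 ≤ a → a ^ ((3:ℝ)/2) = Real.sqrt a ^ 3 := by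
    intro a ha
    rw [show ((3:ℝ)/2) = (1/2)*3 by norm_num, Real.rpow_mul ha, ← Real.sqrt_eq_rpow,
      ← Real.rpow_natCast (Real.sqrt a) 3]
    norm_num
  have e1 : (Q/Q') ^ ((3:ℝ)/2) = (sQ/s')^3 := by
    rw [hrwp _ (by positivity), Real.sqrt_div hQ0.le]
  have e2 : Q ^ ((3:ℝ)/2) = sQ^3 := hrwp Q hQ0.le
  have e3 : Q' ^ ((3:ℝ)/2) = s'^3 := hrwp Q' hQ'.le
  -- abbreviations
  set G := ‖gradient f w‖ with hGdef
  set V1 := f y' - f w + σ/2*‖x' + s' • (x'-y') - w‖^2 with hV1def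
  set Va' := f y' - f w + σ/2*‖x' + sa • (x'-y') - w‖^2 with hVa'def
  set ρ1 := (sQ/sa)^3 with hρ1def
  set ρ2 := (sa/s')^3 with hρ2def
  set κ := 1/(1 + 1/(sa-1)) with hκdef
  have hθ : 0 < 1/(sa-1) := div_pos one_pos (by linarith)
  have h1θ : 0 < 1 + 1/(sa-1) := by linarith
  have hκ0 : 0 < κ := by positivity
  have hκ1 : κ ≤ 1 := by
    rw [hκdef]
    rw [div_le_one h1θ]; linarith
  have hr1 : 1 ≤ sQ/sa := (one_le_div hsa0).2 hsaQ
  have hρ1ge : 1 ≤ ρ1 := by rw [hρ1def]; exact one_le_pow₀ hr1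
  have hr2 : 1 ≤ sa/s' := (one_le_div hs'0).2 hs'a
  have hρ2ge : 1 ≤ ρ2 := by rw [hρ2def]; exact one_le_pow₀ hr2
  have hρ1pos : 0 < ρ1 := by linarith
  have hρ2pos : 0 < ρ2 := by linarith
  -- A1
  have A1 : f y - f w + σ/2*‖x + sQ • (x-y) - w‖^2 ≤
      ρ1*(f y - f w + σ/2*‖x + sa • (x-y) - w‖^2) + (ρ1-1)/σ*G^2 :=
    Vcomp σ sQ sa hσ hsa0 hsaQ (f y - f w) (gradient f w) y x w (by linarith)
  -- A2
  have A2 : f y - f w + σ/2*‖x + sa • (x-y) - w‖^2 ≤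
      f ya - f w + σ/2*‖xa + sa • (xa-ya) - w‖^2 := by
    rw [hz]; linarith
  -- A3
  have A3 : f ya - f w + σ/2*‖xa + sa • (xa-ya) - w‖^2 ≤ κ * Va' := by
    rw [hκdef, one_div, inv_mul_eq_div, le_div_iff₀ h1θ]
    linarith only [hstep]
  -- A4
  have A4 : Va' ≤ ρ2*V1 + (ρ2-1)/σ*G^2 :=
    Vcomp σ sa s' hσ hs'0 hs'a (f y' - f w) (gradient f w) y' x' w (by linarith)
  -- eliminate divisions via T := G^2/σ
  set T := G^2/σ with hTdef
  have hT0 : 0 ≤ T := by rw [hTdef]; positivity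
  have A1' : f y - f w + σ/2*‖x + sQ • (x-y) - w‖^2 ≤
      ρ1*(f y - f w + σ/2*‖x + sa • (x-y) - w‖^2) + (ρ1-1)*T :=
    le_trans A1 (le_of_eq (by rw [hTdef]; ring))
  have A4' : Va' ≤ ρ2*V1 + (ρ2-1)*T :=
    le_trans A4 (le_of_eq (by rw [hTdef]; ring))
  have C1 : ρ1*(f y - f w + σ/2*‖x + sa • (x-y) - w‖^2) ≤ ρ1*(κ*Va') :=
    mul_le_mul_of_nonneg_left (le_trans A2 A3) hρ1pos.le
  have C2 : (ρ1*κ)*Va' ≤ (ρ1*κ)*(ρ2*V1 + (ρ2-1)*T) :=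
    mul_le_mul_of_nonneg_left A4' (by positivity)
  clear_value sQ sa s' G V1 Va' ρ1 ρ2 κ T
  have main1 : f y - f w + σ/2*‖x + sQ • (x-y) - w‖^2 ≤
      (ρ1*κ*ρ2)*V1 + (ρ1*κ*(ρ2-1) + (ρ1-1))*T := by
    linarith only [A1', C1, C2]
  have hmulsq : (sQ/sa)*(sa/s') = sQ/s' := by
    rw [div_mul_div_comm, mul_comm sQ sa, mul_div_mul_left _ _ (ne_of_gt hsa0)]
  have hx3 : ρ1*ρ2 = (sQ/s')^3 := by rw [hρ1def, hρ2def, ← mul_pow, hmulsq]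
  have hcoef : ρ1*κ*ρ2 = κ*(sQ/s')^3 := by rw [← hx3]; ring
  have hcoef2 : ρ1*κ*(ρ2-1) + (ρ1-1) ≤ 2*(sQ/s')^3 := by
    have hx1 : 0 ≤ (ρ1*(ρ2-1))*(1-κ) :=
      mul_nonneg (mul_nonneg hρ1pos.le (by linarith)) (by linarith)
    have hm : (1:ℝ)*1 ≤ ρ1*ρ2 := mul_le_mul hρ1ge hρ2ge (by norm_num) hρ1pos.le
    rw [← hx3]
    linarith only [hx1, hm]
  have main2 : (ρ1*κ*(ρ2-1) + (ρ1-1))*T ≤ (2*(sQ/s')^3)*T :=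
    mul_le_mul_of_nonneg_right hcoef2 hT0
  rw [e1, e2, e3]
  have efinal : κ*(sQ/s')^3*V1 + 2*sQ^3/(σ*s'^3)*G^2
      = (ρ1*κ*ρ2)*V1 + (2*(sQ/s')^3)*T := by
    rw [hcoef, hTdef]
    ring
  calc f y - f w + σ/2*‖x + sQ • (x-y) - w‖^2
      ≤ (ρ1*κ*ρ2)*V1 + (2*(sQ/s')^3)*T := le_trans main1 (by linarith only [main2])
    _ = κ*(sQ/s')^3*V1 + 2*sQ^3/(σ*s'^3)*G^2 := efinal.symm
end

section
/- Let E be a real inner product space, let f : E → ℝ be differentiable at y and at y', let σ > 0, and let Q, Qᵃ, Q' be reals with 0 < Q' ≤ Qᵃ ≤ Q and Qᵃ > 1. Let y', x', yᵃ, xᵃ, y, x, w ∈ E and suppose: (i) (1 + 1/(√Qᵃ − 1))·V_{Qᵃ}(yᵃ, xᵃ; w) ≤ V_{Qᵃ}(y', x'; w); (ii) x + √Qᵃ·(x − y) = xᵃ + √Qᵃ·(xᵃ − yᵃ) and f(y) ≤ f(yᵃ); (iii) the descent conditions f(w) ≤ f(y) − (1/(2σQ))·‖∇f(y)‖² and f(w)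 ≤ f(y') − (1/(2σQᵃ))·‖∇f(y')‖² hold; (iv) the σ-strong-convexity inequality holds at the pairs (w, y) and (w, y'), i.e. f(w) ≥ f(u) + ⟨∇f(u), w − u⟩ + (σ/2)·‖w − u‖² for u ∈ {y, y'}. Then V_Q(y, x; w) ≤ (1/(1 + 1/(√Qᵃ − 1)))·(1 + 2·(Q − Qᵃ))·(1 + 2·(Qᵃ − Q'))·(Q/Q')^{3/2}·V_{Q'}(y', x'; w). -/
/-!
Raising the parameter of `V` from `q` to `Q ≥ q` at a point `(y, x)` costs at most the factor
`(1 + 2(Q - q))·(Q/q)^{3/2}`, provided `w` satisfies the descent condition at level `Q` and the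
strong-convexity inequality at `(w, y)`: together these bound `σ‖w - y‖²` by `8Q (f y - f w)`,
and `z_Q - w` is a combination of `z_q - w` and `w - y`. The theorem chains this change of
parameter from `Qᵃ` to `Q` at `(y, x)`, the restart (which can only decrease `V_{Qᵃ}`), the
accelerated step, and the change from `Q'` to `Qᵃ` at `(y', x')`.
-/

open RealInnerProductSpace

noncomputable def lyapunov {E : Type*} [NormedAddCommGroup E] [InnerProductSpace ℝ E]
    (f : E → ℝ) (σ q : ℝ) (y x w : E) : ℝ :=
  f y - f w + σ / 2 * ‖x + √q • (x - y) - w‖ ^ 2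

section

variable {E : Type*} [NormedAddCommGroup E] [InnerProductSpace ℝ E]

/-- Strong convexity gives `f y - f w + (σ/2)‖w - y‖² ≤ ‖g‖‖w - y‖`, the descent condition
bounds `‖g‖²` by `2σQ (f y - f w)`, and AM-GM splits the product. -/
lemma half_mul_norm_sub_sq_le_of_descent {f : E → ℝ} {σ Q : ℝ} (hσ : 0 < σ) (hQ : 0 < Q)
    {g y w : E}
    (hdesc : f w ≤ f y - 1 / (2 * (σ * Q)) * ‖g‖ ^ 2)
    (hsc : f w ≥ f y + ⟪g, w - y⟫ + σ / 2 * ‖w - y‖ ^ 2) :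
    σ / 2 * ‖w - y‖ ^ 2 ≤ 4 * Q * (f y - f w) := by
  have hdesc' : ‖g‖ ^ 2 / (2 * (σ * Q)) ≤ f y - f w := by
    rw [div_eq_inv_mul, ← one_div]; linarith
  have ha : 0 ≤ f y - f w := le_trans (by positivity) hdesc'
  have hgσ : ‖g‖ ^ 2 / σ ≤ 2 * Q * (f y - f w) := by
    rw [div_le_iff₀ (by positivity)] at hdesc'
    rw [div_le_iff₀ hσ]; linarith
  have hinner : ⟪g, y - w⟫ ≤ ‖g‖ * ‖w - y‖ := by
    rw [norm_sub_rev w y]; exact real_inner_le_norm g (y - w)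
  have hamgm : ‖g‖ * ‖w - y‖ ≤ ‖g‖ ^ 2 / σ + σ / 4 * ‖w - y‖ ^ 2 := by
    rw [div_add' _ _ _ hσ.ne', le_div_iff₀ hσ]
    nlinarith [sq_nonneg (‖g‖ - σ / 2 * ‖w - y‖)]
  have : ⟪g, w - y⟫ = -⟪g, y - w⟫ := by rw [← inner_neg_right, neg_sub]
  nlinarith

lemma cube_mul_sq_norm_le {y x w : E} {s S : ℝ} (hs : 0 < s) (hsS : s ≤ S) :
    s ^ 3 * ‖x + S • (x - y) - w‖ ^ 2 ≤
      S ^ 3 * ‖x + s • (x - y) - w‖ ^ 2 + s * S * (S - s) * ‖w - y‖ ^ 2 := by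
  set Z := ‖x + S • (x - y) - w‖
  set r := ‖x + s • (x - y) - w‖
  set m := ‖w - y‖
  have hsplit : (1 + s) • (x + S • (x - y) - w) =
      (1 + S) • (x + s • (x - y) - w) + (S - s) • (w - y) := by module
  have h1 : (1 + s) * Z ≤ (1 + S) * r + (S - s) * m := by
    have := norm_add_le ((1 + S) • (x + s • (x - y) - w)) ((S - s) • (w - y))
    rwa [← hsplit, norm_smul, norm_smul, norm_smul,
      Real.norm_of_nonneg (by linarith : 0 ≤ 1 + s),
      Real.norm_of_nonneg (by linarith : 0 ≤ 1 + S),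
      Real.norm_of_nonneg (sub_nonneg.2 hsS)] at this
  have h2 : s * Z ≤ S * r + (S - s) * m := by
    refine le_of_mul_le_mul_left ?_ (by linarith : 0 < 1 + s)
    nlinarith [norm_nonneg (x + s • (x - y) - w), norm_nonneg (w - y)]
  calc s ^ 3 * Z ^ 2 = s * (s * Z) ^ 2 := by ring
    _ ≤ s * (S * r + (S - s) * m) ^ 2 := by gcongr
    _ = S ^ 3 * r ^ 2 + s * S * (S - s) * m ^ 2 - (S - s) * (S * r - s * m) ^ 2 := by ring
    _ ≤ S ^ 3 * r ^ 2 + s * S * (S - s) * m ^ 2 := by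
        nlinarith [mul_nonneg (sub_nonneg.2 hsS) (sq_nonneg (S * r - s * m))]

lemma lyapunov_le_mul_lyapunov_of_le {f : E → ℝ} {σ Q q : ℝ} (hσ : 0 < σ) (hq : 0 < q)
    (hqQ : q ≤ Q) {g y x w : E}
    (hdesc : f w ≤ f y - 1 / (2 * (σ * Q)) * ‖g‖ ^ 2)
    (hsc : f w ≥ f y + ⟪g, w - y⟫ + σ / 2 * ‖w - y‖ ^ 2) :
    lyapunov f σ Q y x w ≤
      (1 + 2 * (Q - q)) * (Q / q) ^ ((3 : ℝ) / 2) * lyapunov f σ q y x w := by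
  have hQ : 0 < Q := hq.trans_le hqQ
  have hdist := half_mul_norm_sub_sq_le_of_descent hσ hQ hdesc hsc
  have ha : 0 ≤ f y - f w := (mul_nonneg_iff_of_pos_left (by positivity)).1
    ((by positivity : (0 : ℝ) ≤ σ / 2 * ‖w - y‖ ^ 2).trans hdist)
  set s := √q
  set S := √Q
  have hs : 0 < s := Real.sqrt_pos.2 hq
  have hsS : s ≤ S := Real.sqrt_le_sqrt hqQ
  have hq_sq : q = s ^ 2 := (Real.sq_sqrt hq.le).symm
  have hQ_sq : Q = S ^ 2 := (Real.sq_sqrt hQ.le).symm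
  have hpow : (Q / q) ^ ((3 : ℝ) / 2) = S ^ 3 / s ^ 3 := by
    rw [Real.rpow_div_two_eq_sqrt _ (by positivity), Real.sqrt_div hQ.le,
      show (3 : ℝ) = (3 : ℕ) by norm_num, Real.rpow_natCast, div_pow]
  have hnorm := cube_mul_sq_norm_le (x := x) (y := y) (w := w) hs hsS
  unfold lyapunov
  rw [hpow, ← mul_le_mul_iff_of_pos_left (by positivity : 0 < s ^ 3)]
  set a := f y - f w
  calc s ^ 3 * (a + σ / 2 * ‖x + S • (x - y) - w‖ ^ 2)
      ≤ s ^ 3 * a + σ / 2 * S ^ 3 * ‖x + s • (x - y) - w‖ ^ 2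
          + s * S * (S - s) * (σ / 2 * ‖w - y‖ ^ 2) := by
        have := mul_le_mul_of_nonneg_left hnorm (by positivity : (0 : ℝ) ≤ σ / 2)
        linarith
    _ ≤ s ^ 3 * a + σ / 2 * S ^ 3 * ‖x + s • (x - y) - w‖ ^ 2
          + s * S * (S - s) * (4 * S ^ 2 * a) := by
        rw [hQ_sq] at hdist; gcongr
    _ ≤ (1 + 2 * (Q - q)) * S ^ 3 * (a + σ / 2 * ‖x + s • (x - y) - w‖ ^ 2) := by
        have hcube : 0 ≤ (S ^ 3 - s ^ 3) * a :=
          mul_nonneg (sub_nonneg.2 (pow_le_pow_left₀ hs.le hsS 3)) ha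
        have hgap : 0 ≤ 2 * (S - s) ^ 2 * S ^ 3 * a := by positivity
        have hr : 0 ≤ (S ^ 2 - s ^ 2) * S ^ 3 * (σ * ‖x + s • (x - y) - w‖ ^ 2) :=
          mul_nonneg (mul_nonneg (by nlinarith) (by positivity)) (by positivity)
        rw [hQ_sq, hq_sq]
        linarith
    _ = s ^ 3 * ((1 + 2 * (Q - q)) * (S ^ 3 / s ^ 3) *
          (a + σ / 2 * ‖x + s • (x - y) - w‖ ^ 2)) := by
        field_simp

end

theorem stmt9_general {E : Type*} [NormedAddCommGroup E] [InnerProductSpace ℝ E] [CompleteSpace E]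
    (f : E → ℝ) (σ Q Qa Q' : ℝ) (hσ : 0 < σ)
    (hQ' : 0 < Q') (hQ'Qa : Q' ≤ Qa) (hQaQ : Qa ≤ Q) (hQa1 : 1 < Qa)
    (y' x' ya xa y x w : E)
    (hstep : (1 + 1 / (Real.sqrt Qa - 1)) *
        (f ya - f w + σ / 2 * ‖xa + Real.sqrt Qa • (xa - ya) - w‖ ^ 2) ≤
      f y' - f w + σ / 2 * ‖x' + Real.sqrt Qa • (x' - y') - w‖ ^ 2)
    (hz : x + Real.sqrt Qa • (x - y) = xa + Real.sqrt Qa • (xa - ya))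
    (hfy : f y ≤ f ya)
    (hdesc_y : f w ≤ f y - 1 / (2 * (σ * Q)) * ‖gradient f y‖ ^ 2)
    (hdesc_y' : f w ≤ f y' - 1 / (2 * (σ * Qa)) * ‖gradient f y'‖ ^ 2)
    (hsc_y : f w ≥ f y + ⟪gradient f y, w - y⟫ + σ / 2 * ‖w - y‖ ^ 2)
    (hsc_y' : f w ≥ f y' + ⟪gradient f y', w - y'⟫ + σ / 2 * ‖w - y'‖ ^ 2) :
    f y - f w + σ / 2 * ‖x + Real.sqrt Q • (x - y) - w‖ ^ 2 ≤
      (1 / (1 + 1 / (Real.sqrt Qa - 1))) * (1 + 2 * (Q - Qa)) * (1 + 2 * (Qa - Q')) *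
        (Q / Q') ^ ((3 : ℝ) / 2) *
        (f y' - f w + σ / 2 * ‖x' + Real.sqrt Q' • (x' - y') - w‖ ^ 2) := by
  have hQa : 0 < Qa := hQ'.trans_le hQ'Qa
  have hQ : 0 < Q := hQa.trans_le hQaQ
  have hδ : 0 < 1 + 1 / (√Qa - 1) := by
    have : 1 < √Qa := Real.lt_sqrt_of_sq_lt (by linarith)
    have : 0 < 1 / (√Qa - 1) := one_div_pos.2 (by linarith)
    linarith
  set κ := 1 / (1 + 1 / (√Qa - 1)) with hκ
  set C := (1 + 2 * (Q - Qa)) * (Q / Qa) ^ ((3 : ℝ) / 2) with hC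
  set C' := (1 + 2 * (Qa - Q')) * (Qa / Q') ^ ((3 : ℝ) / 2) with hC'
  have hC0 : 0 ≤ C := mul_nonneg (by linarith) (by positivity)
  have hκ0 : 0 ≤ κ := (one_div_pos.2 hδ).le
  have hpow :
      (Q / Qa) ^ ((3 : ℝ) / 2) * (Qa / Q') ^ ((3 : ℝ) / 2) = (Q / Q') ^ ((3 : ℝ) / 2) := by
    rw [← Real.mul_rpow (by positivity) (by positivity), div_mul_div_cancel₀ hQa.ne']
  have h_restart : lyapunov f σ Qa y x w ≤ lyapunov f σ Qa ya xa w := by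
    unfold lyapunov; rw [hz]; linarith
  have h_step : lyapunov f σ Qa ya xa w ≤ κ * lyapunov f σ Qa y' x' w := by
    rw [hκ, one_div_mul_eq_div, le_div_iff₀ hδ, mul_comm]; exact hstep
  calc lyapunov f σ Q y x w
      ≤ C * lyapunov f σ Qa y x w := lyapunov_le_mul_lyapunov_of_le hσ hQa hQaQ hdesc_y hsc_y
    _ ≤ C * (κ * (C' * lyapunov f σ Q' y' x' w)) := by
        refine mul_le_mul_of_nonneg_left (h_restart.trans (h_step.trans ?_)) hC0
        rw [← mul_assoc, mul_assoc κ]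
        exact mul_le_mul_of_nonneg_left
          (lyapunov_le_mul_lyapunov_of_le hσ hQ' hQ'Qa hdesc_y' hsc_y') hκ0
    _ = κ * (1 + 2 * (Q - Qa)) * (1 + 2 * (Qa - Q')) * (Q / Q') ^ ((3 : ℝ) / 2) *
          lyapunov f σ Q' y' x' w := by
        rw [hC, hC', ← hpow]; ring

/-- Restarted Lyapunov recursion, descent reference point (Lemma combined-restart (b)):
under the descent conditions on `w` the gradient slack vanishes at the cost of the
factors `(1 + 2(Q − Qᵃ))·(1 + 2(Qᵃ − Q'))`.
Here `V_q(y, x; w) = f y − f w + (σ/2)·‖x + √q·(x − y) − w‖²`. -/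
theorem stmt9 {E : Type*} [NormedAddCommGroup E] [InnerProductSpace ℝ E] [CompleteSpace E]
    (f : E → ℝ) (σ Q Qa Q' : ℝ) (hσ : 0 < σ)
    (hQ' : 0 < Q') (hQ'Qa : Q' ≤ Qa) (hQaQ : Qa ≤ Q) (hQa1 : 1 < Qa)
    (y' x' ya xa y x w : E)
    (hdiff_y : DifferentiableAt ℝ f y) (hdiff_y' : DifferentiableAt ℝ f y')
    (hstep : (1 + 1 / (Real.sqrt Qa - 1)) *
        (f ya - f w + σ / 2 * ‖xa + Real.sqrt Qa • (xa - ya) - w‖ ^ 2) ≤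
      f y' - f w + σ / 2 * ‖x' + Real.sqrt Qa • (x' - y') - w‖ ^ 2)
    (hz : x + Real.sqrt Qa • (x - y) = xa + Real.sqrt Qa • (xa - ya))
    (hfy : f y ≤ f ya)
    (hdesc_y : f w ≤ f y - 1 / (2 * (σ * Q)) * ‖gradient f y‖ ^ 2)
    (hdesc_y' : f w ≤ f y' - 1 / (2 * (σ * Qa)) * ‖gradient f y'‖ ^ 2)
    (hsc_y : f w ≥ f y + ⟪gradient f y, w - y⟫ + σ / 2 * ‖w - y‖ ^ 2)
    (hsc_y' : f w ≥ f y' + ⟪gradient f y', w - y'⟫ + σ / 2 * ‖w - y'‖ ^ 2) :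
    f y - f w + σ / 2 * ‖x + Real.sqrt Q • (x - y) - w‖ ^ 2 ≤
      (1 / (1 + 1 / (Real.sqrt Qa - 1))) * (1 + 2 * (Q - Qa)) * (1 + 2 * (Qa - Q')) *
        (Q / Q') ^ ((3 : ℝ) / 2) *
        (f y' - f w + σ / 2 * ‖x' + Real.sqrt Q' • (x' - y') - w‖ ^ 2) :=
  stmt9_general f σ Q Qa Q' hσ hQ' hQ'Qa hQaQ hQa1 y' x' ya xa y x w hstep hz hfy hdesc_y hdesc_y'
    hsc_y hsc_y'
end

section
/- Let t ∈ ℕ, let Q : ℕ → ℝ be a nondecreasing sequence with Q(0) ≥ 1, let Qᵃ : ℕ → ℝ satisfy Q(k) ≤ Qᵃ(k+1) ≤ Q(k+1) for all k < t, and let V : ℕ → ℝ with V(0) ≥ 0. Let m ∈ ℕ satisfy #{k < t : Q(k+1) > Qᵃ(k+1)} + #{k < t : Qᵃ(k+1) > Q(k)} ≤ m. Suppose that for every k < t one has V(k+1) ≤ (1 − 1/√(Q(t)))·(1 + 2·(Q(k+1) − Qᵃ(k+1)))·(1 + 2·(Qᵃ(k+1) − Q(k)))·(Q(k+1)/Q(k))^{3/2}·V(k).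 Then V(t) ≤ exp(−t/√(Q(t)))·(3·Q(t))^{m}·(Q(t)/Q(0))^{3/2}·V(0). -/
/-!
Unrolling the recursion bounds `V t` by `V 0` times the product of the step factors. The
factors `1 - 1/√Q(t)` multiply to at most `exp (-t/√Q(t))` since `1 - x ≤ exp (-x)`, and the
ratios `Q(k+1)/Q(k)` telescope to `Q(t)/Q(0)`. A factor `1 + 2Δ` equals `1` unless `Δ > 0`, and
every increment satisfies `Δ ≤ Q(t) - Q(0)`, so `1 + 2Δ ≤ 3 Q(t)`; at most `m` factors are `> 1`.
-/

open Finset Real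

theorem prod_range_div_of_ne_zero {G₀ : Type*} [CommGroupWithZero G₀] (f : ℕ → G₀)
    (hf : ∀ k, f k ≠ 0) (n : ℕ) : ∏ k ∈ range n, f (k + 1) / f k = f n / f 0 := by
  simpa using congrArg Units.val (prod_range_div (fun k => Units.mk0 (f k) (hf k)) n)

theorem le_prod_range_mul_of_le_mul {R : Type*} [CommSemiring R] [PartialOrder R]
    [IsOrderedRing R] {V f : ℕ → R} {n : ℕ} (hf : ∀ k < n, 0 ≤ f k)
    (hV : ∀ k < n, V (k + 1) ≤ f k * V k) : V n ≤ (∏ k ∈ range n, f k) * V 0 := by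
  induction n with
  | zero => simp
  | succ n ih =>
    have ih' := ih (fun k hk => hf k (by omega)) (fun k hk => hV k (by omega))
    calc V (n + 1) ≤ f n * V n := hV n n.lt_succ_self
      _ ≤ f n * ((∏ k ∈ range n, f k) * V 0) := by gcongr; exact hf n n.lt_succ_self
      _ = (∏ k ∈ range (n + 1), f k) * V 0 := by rw [prod_range_succ]; ring

theorem prod_le_pow_card_filter {ι R : Type*} [CommSemiring R] [PartialOrder R]
    [IsOrderedRing R] (s : Finset ι) (p : ι → Prop) [DecidablePred p] {g : ι → R} {C : R}
    (h0 : ∀ k ∈ s, 0 ≤ g k) (hp : ∀ k ∈ s, p k → g k ≤ C) (hnp : ∀ k ∈ s, ¬ p k → g k ≤ 1) :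
    ∏ k ∈ s, g k ≤ C ^ #{k ∈ s | p k} := by
  rw [← prod_filter_mul_prod_filter_not s p, ← mul_one (C ^ _)]
  have hC : ∏ k ∈ s with p k, g k ≤ C ^ #{k ∈ s | p k} :=
    (prod_le_prod (fun k hk => h0 k (mem_filter.1 hk).1)
      (fun k hk => hp k (mem_filter.1 hk).1 (mem_filter.1 hk).2)).trans_eq (prod_const C)
  have h1 : ∏ k ∈ s with ¬ p k, g k ≤ 1 :=
    prod_le_one (fun k hk => h0 k (mem_filter.1 hk).1)
      (fun k hk => hnp k (mem_filter.1 hk).1 (mem_filter.1 hk).2)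
  exact mul_le_mul hC h1 (prod_nonneg fun k hk => h0 k (mem_filter.1 hk).1)
    ((prod_nonneg fun k hk => h0 k (mem_filter.1 hk).1).trans hC)

theorem prod_one_add_two_mul_sub_le {ι R : Type*} [Field R] [LinearOrder R]
    [IsStrictOrderedRing R] (s : Finset ι) {a b : ι → R} {D : R}
    (hab : ∀ k ∈ s, a k ≤ b k) (hD : ∀ k ∈ s, b k - a k ≤ D) :
    ∏ k ∈ s, (1 + 2 * (b k - a k)) ≤ (1 + 2 * D) ^ #{k ∈ s | a k < b k} :=
  prod_le_pow_card_filter s _ (fun k hk => by linarith [hab k hk])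
    (fun k hk _ => by linarith [hD k hk]) (fun k hk h => by linarith [not_lt.1 h])

theorem one_sub_pow_le_exp_neg_mul {x : ℝ} (hx : x ≤ 1) (n : ℕ) :
    (1 - x) ^ n ≤ exp (-(n * x)) := by
  calc (1 - x) ^ n ≤ exp (-x) ^ n := pow_le_pow_left₀ (by linarith) (one_sub_le_exp_neg x) n
    _ = exp (-(n * x)) := by rw [← exp_nat_mul, mul_neg]

theorem prod_one_add_two_mul_increments_le {t m : ℕ} {Q Qa : ℕ → ℝ} (hQmono : Monotone Q)
    (hQ0 : 1 ≤ Q 0) (hQa : ∀ k < t, Q k ≤ Qa (k + 1) ∧ Qa (k + 1) ≤ Q (k + 1))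
    (hm : #{k ∈ range t | Qa (k + 1) < Q (k + 1)} + #{k ∈ range t | Q k < Qa (k + 1)} ≤ m) :
    (∏ k ∈ range t, (1 + 2 * (Q (k + 1) - Qa (k + 1)))) *
      ∏ k ∈ range t, (1 + 2 * (Qa (k + 1) - Q k)) ≤ (3 * Q t) ^ m := by
  have hQt : Q 0 ≤ Q t := hQmono t.zero_le
  have hgaps : ∀ k ∈ range t, Q 0 ≤ Q k ∧ Q k ≤ Qa (k + 1) ∧ Qa (k + 1) ≤ Q (k + 1) ∧
      Q (k + 1) ≤ Q t := fun k hk =>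
    ⟨hQmono k.zero_le, (hQa k (mem_range.1 hk)).1, (hQa k (mem_range.1 hk)).2,
      hQmono (mem_range.1 hk)⟩
  have hP₁ := prod_one_add_two_mul_sub_le (range t) (a := fun k => Qa (k + 1))
    (b := fun k => Q (k + 1)) (D := Q t - Q 0) (fun k hk => (hgaps k hk).2.2.1)
    (fun k hk => by linarith [hgaps k hk])
  have hP₂ := prod_one_add_two_mul_sub_le (range t) (a := Q) (b := fun k => Qa (k + 1))
    (D := Q t - Q 0) (fun k hk => (hgaps k hk).2.1) (fun k hk => by linarith [hgaps k hk])
  refine (mul_le_mul hP₁ hP₂ ?_ (pow_nonneg (by linarith) _)).trans ?_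
  · exact prod_nonneg fun k hk => by linarith [hgaps k hk]
  rw [← pow_add]
  exact (pow_le_pow_right₀ (by linarith) hm).trans
    (pow_le_pow_left₀ (by linarith) (by linarith) m)

/-- Chained restarted Lyapunov recursion (descent reference point, sequence form):
with intermediate condition numbers `Qᵃ(k+1)` between `Q(k)` and `Q(k+1)` and `m`
bounding the total number of condition-number increases, per-step factors
`(1 − 1/√Q(t))·(1 + 2(Q(k+1) − Qᵃ(k+1)))·(1 + 2(Qᵃ(k+1) − Q(k)))·(Q(k+1)/Q(k))^{3/2}`
chain into `V(t) ≤ e^{−t/√Q(t)}·(3Q(t))^m·(Q(t)/Q(0))^{3/2}·V(0)`. -/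
theorem stmt11 (t : ℕ) (Q : ℕ → ℝ) (hQmono : Monotone Q) (hQ0 : 1 ≤ Q 0)
    (Qa : ℕ → ℝ) (hQa : ∀ k < t, Q k ≤ Qa (k + 1) ∧ Qa (k + 1) ≤ Q (k + 1))
    (V : ℕ → ℝ) (hV0 : 0 ≤ V 0) (m : ℕ)
    (hm : ((Finset.range t).filter fun k => Qa (k + 1) < Q (k + 1)).card +
          ((Finset.range t).filter fun k => Q k < Qa (k + 1)).card ≤ m)
    (hrec : ∀ k < t, V (k + 1) ≤
      (1 - 1 / Real.sqrt (Q t)) * (1 + 2 * (Q (k + 1) - Qa (k + 1))) *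
        (1 + 2 * (Qa (k + 1) - Q k)) * (Q (k + 1) / Q k) ^ ((3 : ℝ) / 2) * V k) :
    V t ≤ Real.exp (-(t : ℝ) / Real.sqrt (Q t)) * (3 * Q t) ^ m *
      (Q t / Q 0) ^ ((3 : ℝ) / 2) * V 0 := by
  have hQpos : ∀ k, 0 < Q k := fun k => one_pos.trans_le (hQ0.trans (hQmono k.zero_le))
  have hratio : ∀ k, 0 < Q (k + 1) / Q k := fun k => div_pos (hQpos _) (hQpos _)
  have hstep : 1 / √(Q t) ≤ 1 :=
    div_le_one_of_le₀ (one_le_sqrt.2 (hQ0.trans (hQmono t.zero_le))) (sqrt_nonneg _)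
  have hchain := le_prod_range_mul_of_le_mul (fun k hk => by
    obtain ⟨h₁, h₂⟩ := hQa k hk
    have := rpow_nonneg (hratio k).le ((3 : ℝ) / 2)
    apply_rules [mul_nonneg] <;> linarith) hrec
  rw [prod_mul_distrib, prod_mul_distrib, prod_mul_distrib, prod_const, card_range,
    finsetProd_rpow _ _ (fun k _ => (hratio k).le),
    prod_range_div_of_ne_zero Q (fun k => (hQpos k).ne'),
    mul_assoc ((1 - 1 / √(Q t)) ^ t)] at hchain
  refine hchain.trans ?_
  gcongr
  · exact rpow_nonneg (div_pos (hQpos t) (hQpos 0)).le _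
  · exact mul_nonneg (prod_nonneg fun k hk => by linarith [hQa k (mem_range.1 hk)])
      (prod_nonneg fun k hk => by linarith [hQa k (mem_range.1 hk)])
  · simpa only [mul_one_div, neg_div] using one_sub_pow_le_exp_neg_mul hstep t
  · exact prod_one_add_two_mul_increments_le hQmono hQ0 hQa hm
end
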